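/- Let A' be a commutative K-algebra, (L',ω') a Lie-Rinehart algebra over A', and φ : A → A' a morphism of commutative K-algebras. Then A_A^{A'}(L',ω') = {(X',δ) ∈ L' × Der_K(A) | ω'(X')(φ(a)) = φ(δ(a)) for all a ∈ A} is a Lie-Rinehart algebra over A with component-wise bracket, A-action a·(X',δ) = (φ(a)·X', a·δ), and anchor the second projection. -/
import Mathlib


/-- Component-wise Lie ring structure on a product. -/
instance prodLieRing (L M : Type*) [LieRing L] [LieRing M] : LieRing (L × M) where
  bracket p q := (⁅p.1, q.1⁆, ⁅p.2, q.2⁆)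
  add_lie p q r := by ext <;> exact add_lie ..
  lie_add p q r := by ext <;> exact lie_add ..
  lie_self p := by ext <;> exact lie_self _
  leibniz_lie p q r := by ext <;> exact leibniz_lie ..

/-- Component-wise Lie algebra structure on a product. -/
instance prodLieAlgebra (K L M : Type*) [Field K] [LieRing L] [LieRing M]
    [LieAlgebra K L] [LieAlgebra K M] : LieAlgebra K (L × M) where
  lie_smul t p q := by ext <;> exact lie_smul ..

variable (K : Type*) [Field K] (A A' : Type*) [CommRing A] [Algebra K A]
  [CommRing A'] [Algebra K A']
  (L' : Type*) [LieRing L'] [LieAlgebra K L'] [Module A' L']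

/-- The `A`-action `a·(X',δ) = (φ(a)·X', a•δ)` on `L' × Der_K(A)`. -/
def actBase (φ : A →ₐ[K] A') (a : A) (p : L' × Derivation K A A) :
    L' × Derivation K A A :=
  (φ a • p.1, a • p.2)

/-- Let `(L',ω')` be a Lie-Rinehart algebra over `A'` and `φ : A → A'` a morphism of
commutative `K`-algebras. Then
`A_A^{A'}(L',ω') = {(X',δ) ∈ L' × Der_K(A) | ω'(X')(φ a) = φ (δ a)}` is a Lie-Rinehart
algebra over `A` with component-wise bracket, `A`-action `a·(X',δ) = (φ(a)·X', a•δ)` and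
anchor the second projection. -/
theorem basechange_isLieRinehart (φ : A →ₐ[K] A') (ω' : L' →ₗ⁅K⁆ Derivation K A' A')
    (hω' : ∀ (a : A') (X : L'), ω' (a • X) = a • ω' X)
    (hLeib' : ∀ (a : A') (X Y : L'), ⁅X, a • Y⁆ = a • ⁅X, Y⁆ + ω' X a • Y) :
    letI S : Set (L' × Derivation K A A) :=
      {p | ∀ a : A, ω' p.1 (φ a) = φ (p.2 a)}
    (0 : L' × Derivation K A A) ∈ S ∧
    (∀ p ∈ S, ∀ q ∈ S, p + q ∈ S) ∧
    (∀ a : A, ∀ p ∈ S, actBase K A A' L' φ a p ∈ S) ∧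
    (∀ p ∈ S, ∀ q ∈ S, ⁅p, q⁆ ∈ S) ∧
    (∀ p ∈ S, ∀ q ∈ S, ∀ a : A,
      ⁅p, actBase K A A' L' φ a q⁆ =
        actBase K A A' L' φ a ⁅p, q⁆ + actBase K A A' L' φ (p.2 a) q) := by
  refine ⟨?_, ?_, ?_, ?_, ?_⟩
  · intro a; simp
  · intro p hp q hq a
    have := hp a; have := hq a
    simp_all [add_mul, mul_add]
  · intro a p hp b
    have h := hp b
    show (ω' (φ a • p.1)) (φ b) = φ ((a • p.2) b)
    rw [hω']
    rw [Derivation.smul_apply, Derivation.smul_apply, h, smul_eq_mul, smul_eq_mul, map_mul]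
  · intro p hp q hq a
    show ω' ⁅p.1, q.1⁆ (φ a) = φ (⁅p.2, q.2⁆ a)
    rw [LieHom.map_lie]
    show ω' p.1 (ω' q.1 (φ a)) - ω' q.1 (ω' p.1 (φ a)) = φ (p.2 (q.2 a) - q.2 (p.2 a))
    rw [hq a, hp a, hp (q.2 a), hq (p.2 a), map_sub]
  · intro p hp q hq a
    have key : ⁅p.2, a • q.2⁆ = a • ⁅p.2, q.2⁆ + p.2 a • q.2 := by
      ext b
      show p.2 ((a • q.2) b) - (a • q.2) (p.2 b) =
        (a • ⁅p.2, q.2⁆) b + (p.2 a • q.2) b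
      rw [Derivation.smul_apply, Derivation.smul_apply, Derivation.smul_apply]
      show p.2 (a • q.2 b) - a • q.2 (p.2 b) =
        a • (p.2 (q.2 b) - q.2 (p.2 b)) + p.2 a • q.2 b
      simp only [smul_eq_mul, Derivation.leibniz, smul_eq_mul]
      ring
    have key1 : ⁅p.1, φ a • q.1⁆ = φ a • ⁅p.1, q.1⁆ + φ (p.2 a) • q.1 := by
      rw [hLeib', hp a]
    show (⁅p.1, φ a • q.1⁆, ⁅p.2, a • q.2⁆) =
      (φ a • ⁅p.1, q.1⁆, a • ⁅p.2, q.2⁆) + (φ (p.2 a) • q.1, p.2 a • q.2)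
    rw [key1, key]
    rfl
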